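/- Let K ⊆ H be a nonempty compact set and ε > 0, and suppose that every open set U ⊆ H with K ∩ U nonempty satisfies that the norm diameter of K ∩ U is greater than ε. Then there exists a nonempty perfect subset P of K (i.e., P is compact and has no isolated points in the product topology) such that ‖f−g‖_∞ > ε for all f, g ∈ P with f ≠ g; in particular K is not norm separable. -/

import Mathlib

/-!
The hypothesis gives, inside every relatively open piece `K ∩ U`, two points at norm distance
`> ε`. As a supremum of continuous coordinate functions, the norm distance is lower
semicontinuous on `H × H`, so the separation persists on small closed balls around the two
points. Iterating yields a Cantor scheme of shrinking pieces of `K`, whose branches define a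
continuous map from `ℕ → Bool` into `K` sending distinct sequences to points at norm distance
`> ε`. Its image is compact and uncountable, hence contains a nonempty perfect set
(Cantor–Bendixson); and an uncountable `ε`-separated set rules out norm separability.
-/

noncomputable section

/-- `H = [-1,1]^ℕ`, the product of countably many copies of `[-1,1]`, with the
product topology (and its Borel σ-algebra). -/
abbrev H : Type := ℕ → Set.Icc (-1 : ℝ) 1

/-- The supremum distance `‖f − g‖_∞ = sup_n |f(n) − g(n)|` on `H`. -/
noncomputable def normDist (f g : H) : ℝ := ⨆ n, |(f n : ℝ) - (g n : ℝ)|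

/-- The norm diameter of `S ⊆ H`: `sup {‖f − g‖_∞ : f, g ∈ S}`. -/
noncomputable def normDiam (S : Set H) : ℝ :=
  sSup {d : ℝ | ∃ f ∈ S, ∃ g ∈ S, d = normDist f g}

/-- `S ⊆ H` is norm separable: separable w.r.t. the metric `(f,g) ↦ ‖f − g‖_∞`. -/
def NormSeparable (S : Set H) : Prop :=
  ∃ D : Set H, D.Countable ∧ D ⊆ S ∧ ∀ f ∈ S, ∀ δ : ℝ, 0 < δ → ∃ g ∈ D, normDist f g < δ

open Set Function Filter Topology PiNat

namespace CantorScheme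

variable {α β : Type*}

theorem map_rel_of_ne {A : List β → Set α} {R : α → α → Prop}
    (hA : ∀ l a b, a ≠ b → ∀ x ∈ A (a :: l), ∀ y ∈ A (b :: l), R x y)
    {x y : (inducedMap A).1} (hxy : x ≠ y) : R ((inducedMap A).2 x) ((inducedMap A).2 y) := by
  have hne : (x : ℕ → β) ≠ y := Subtype.coe_injective.ne hxy
  have hres : res (x : ℕ → β) (firstDiff x.1 y) = res y (firstDiff x.1 y) :=
    res_eq_res.2 fun _ hm => apply_eq_of_lt_firstDiff hm
  refine hA (res x.1 (firstDiff x.1 y)) _ _ (apply_firstDiff_ne hne) _ ?_ _ ?_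
  · rw [← res_succ]
    exact map_mem x _
  · rw [hres, ← res_succ]
    exact map_mem y _

def ofSplit {S : Type*} (s₀ : S) (split : ℕ → S → β → S) : List β → S
  | [] => s₀
  | a :: l => split l.length (ofSplit s₀ split l) a

theorem exists_continuous_pairwise_of_split [MetricSpace α] [CompleteSpace α]
    [TopologicalSpace β] [DiscreteTopology β] {P : Set α → Prop} {R : α → α → Prop}
    (hclosed : ∀ C, P C → IsClosed C) (hne : ∀ C, P C → C.Nonempty)
    (hsplit : ∀ C, P C → ∀ δ : ℝ, 0 < δ → ∃ D : β → Set α,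
      (∀ a, P (D a) ∧ D a ⊆ C ∧ ∀ x ∈ D a, ∀ y ∈ D a, dist x y ≤ δ) ∧
      ∀ a b, a ≠ b → ∀ x ∈ D a, ∀ y ∈ D b, R x y)
    {C : Set α} (hC : P C) :
    ∃ f : (ℕ → β) → α, range f ⊆ C ∧ Continuous f ∧ Pairwise fun x y => R (f x) (f y) := by
  choose D hD hR using fun (C : {C // P C}) (n : ℕ) => hsplit C C.2 ((1 / 2) ^ n) (by positivity)
  let node : List β → {C // P C} := ofSplit ⟨C, hC⟩ fun n C a => ⟨D C n a, (hD C n a).1⟩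
  let A : List β → Set α := fun l => node l
  have hanti : ClosureAntitone A :=
    Antitone.closureAntitone (fun _ a => (hD _ _ a).2.1) fun _ => hclosed _ (Subtype.prop _)
  have hdiam : VanishingDiam A := by
    intro x
    rw [← Filter.tendsto_add_atTop_iff_nat 1]
    have hlim : Tendsto (fun n : ℕ => ENNReal.ofReal ((1 / 2) ^ n)) atTop (𝓝 0) := by
      simpa using ENNReal.tendsto_ofReal (tendsto_pow_atTop_nhds_zero_of_lt_one
        (by norm_num : (0 : ℝ) ≤ 1 / 2) (by norm_num))
    refine tendsto_of_tendsto_of_tendsto_of_le_of_le tendsto_const_nhds hlim (fun _ => zero_le)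
      fun n => ?_
    calc Metric.ediam (A (res x (n + 1))) = Metric.ediam (D (node (res x n)) n (x n)) := by
          simp only [A, node, res_succ, ofSplit, res_length]
      _ ≤ _ := Metric.ediam_le_of_forall_dist_le (hD _ n (x n)).2.2
  have hdom : (inducedMap A).1 = univ :=
    hanti.map_of_vanishingDiam hdiam fun _ => hne _ (Subtype.prop _)
  refine ⟨fun x => (inducedMap A).2 ⟨x, hdom ▸ mem_univ x⟩, ?_, ?_, ?_⟩
  · rintro _ ⟨x, rfl⟩
    exact map_mem _ 0
  · exact hdiam.map_continuous.comp (continuous_id.subtype_mk _)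
  · intro x y hxy
    exact map_rel_of_ne (fun _ _ _ hab => hR _ _ _ _ hab) fun h => hxy (congrArg Subtype.val h)

end CantorScheme

lemma not_countable_nat_bool : ¬ Countable (ℕ → Bool) := by
  rw [← Cardinal.mk_le_aleph0_iff, Cardinal.mk_pi]
  simpa using Cardinal.aleph0_lt_continuum

lemma normDist_bddAbove (f g : H) : BddAbove (range fun n => |(f n : ℝ) - g n|) := by
  refine ⟨2, ?_⟩
  rintro _ ⟨n, rfl⟩
  have hf := (f n).2
  have hg := (g n).2
  simp only [mem_Icc] at hf hg
  exact abs_sub_le_iff.2 ⟨by linarith, by linarith⟩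

lemma abs_sub_le_normDist (f g : H) (n : ℕ) : |(f n : ℝ) - g n| ≤ normDist f g :=
  le_ciSup (normDist_bddAbove f g) n

lemma normDist_comm (f g : H) : normDist f g = normDist g f := by
  simp only [normDist, abs_sub_comm]

lemma normDist_self (f : H) : normDist f f = 0 := by
  simp [normDist]

lemma normDist_triangle (f g k : H) : normDist f k ≤ normDist f g + normDist g k :=
  ciSup_le fun n => (abs_sub_le _ (g n : ℝ) _).trans <|
    add_le_add (abs_sub_le_normDist f g n) (abs_sub_le_normDist g k n)

lemma lowerSemicontinuous_normDist : LowerSemicontinuous fun p : H × H => normDist p.1 p.2 :=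
  lowerSemicontinuous_ciSup (fun p => normDist_bddAbove p.1 p.2) fun n =>
    (by fun_prop : Continuous fun p : H × H => |(p.1 n : ℝ) - p.2 n|).lowerSemicontinuous

lemma exists_lt_normDist_of_lt_normDiam {S : Set H} {ε : ℝ} (hε : 0 ≤ ε) (h : ε < normDiam S) :
    ∃ f ∈ S, ∃ g ∈ S, ε < normDist f g := by
  by_contra! hle
  exact h.not_ge <| Real.sSup_le (by rintro _ ⟨f, hf, g, hg, rfl⟩; exact hle f hf g hg) hε

lemma NormSeparable.countable_of_separated {S T : Set H} (hS : NormSeparable S) {ε : ℝ}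
    (hε : 0 < ε) (hTS : T ⊆ S) (hT : ∀ f ∈ T, ∀ g ∈ T, f ≠ g → ε < normDist f g) :
    T.Countable := by
  obtain ⟨D, hD, -, hdense⟩ := hS
  choose! d hdD hd using fun f (hf : f ∈ T) => hdense f (hTS hf) (ε / 2) (half_pos hε)
  refine MapsTo.countable_of_injOn hdD (fun f hf g hg hfg => ?_) hD
  by_contra hne
  have : ε < ε := calc
    ε < normDist f g := hT f hf g hg hne
    _ ≤ normDist f (d f) + normDist (d f) g := normDist_triangle f (d f) g
    _ < ε / 2 + ε / 2 := add_lt_add (hd f hf) (by rw [hfg, normDist_comm]; exact hd g hg)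
    _ = ε := add_halves ε
  exact this.false

section ProductMetric

open Metric

-- Any metric for the product topology will do: it only measures how fast the pieces shrink.
abbrev H.metricSpace : MetricSpace H := TopologicalSpace.metrizableSpaceMetric H

attribute [local instance] H.metricSpace

lemma exists_separated_closedBalls {U : Set H} (hU : IsOpen U) {ε : ℝ} {f g : H} (hf : f ∈ U)
    (hg : g ∈ U) (hfg : ε < normDist f g) {r : ℝ} (hr : 0 < r) :
    ∃ t, 0 < t ∧ t ≤ r ∧ closedBall f t ⊆ U ∧ closedBall g t ⊆ U ∧
      ∀ x ∈ closedBall f t, ∀ y ∈ closedBall g t, ε < normDist x y := by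
  have hO : {p : H × H | ε < normDist p.1 p.2} ∩ U ×ˢ U ∈ 𝓝 (f, g) :=
    ((lowerSemicontinuous_normDist.isOpen_preimage ε).inter (hU.prod hU)).mem_nhds ⟨hfg, hf, hg⟩
  obtain ⟨t, ht, hsub⟩ := nhds_basis_closedBall.mem_iff.1 hO
  have hs : 0 < min t r := lt_min ht hr
  have hprod : closedBall f (min t r) ×ˢ closedBall g (min t r) ⊆
      {p : H × H | ε < normDist p.1 p.2} ∩ U ×ˢ U := by
    rw [closedBall_prod_same]
    exact (closedBall_subset_closedBall (min_le_left t r)).trans hsub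
  exact ⟨min t r, hs, min_le_right t r,
    fun x hx => (hprod (mk_mem_prod hx (mem_closedBall_self hs.le))).2.1,
    fun y hy => (hprod (mk_mem_prod (mem_closedBall_self hs.le) hy)).2.2,
    fun x hx y hy => (hprod (mk_mem_prod hx hy)).1⟩

lemma exists_separated_closedBalls_of_lt_normDiam {K : Set H} {ε : ℝ} (hε : 0 ≤ ε)
    (h : ∀ U : Set H, IsOpen U → (K ∩ U).Nonempty → ε < normDiam (K ∩ U))
    {c : H} (hc : c ∈ K) {s δ : ℝ} (hs : 0 < s) (hδ : 0 < δ) :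
    ∃ f ∈ K, ∃ g ∈ K, ∃ t, 0 < t ∧ 2 * t ≤ δ ∧
      closedBall f t ⊆ closedBall c s ∧ closedBall g t ⊆ closedBall c s ∧
      ∀ x ∈ closedBall f t, ∀ y ∈ closedBall g t, ε < normDist x y := by
  obtain ⟨f, ⟨hfK, hf⟩, g, ⟨hgK, hg⟩, hfg⟩ :=
    exists_lt_normDist_of_lt_normDiam hε (h (ball c s) isOpen_ball ⟨c, hc, mem_ball_self hs⟩)
  obtain ⟨t, ht, htδ, hft, hgt, hsep⟩ :=
    exists_separated_closedBalls isOpen_ball hf hg hfg (half_pos hδ)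
  exact ⟨f, hfK, g, hgK, t, ht, by linarith, hft.trans ball_subset_closedBall,
    hgt.trans ball_subset_closedBall, hsep⟩

lemma exists_continuous_pairwise_lt_normDist {K : Set H} (hKc : IsClosed K) (hK : K.Nonempty)
    {ε : ℝ} (hε : 0 ≤ ε)
    (h : ∀ U : Set H, IsOpen U → (K ∩ U).Nonempty → ε < normDiam (K ∩ U)) :
    ∃ φ : (ℕ → Bool) → H, range φ ⊆ K ∧ Continuous φ ∧
      Pairwise fun σ τ => ε < normDist (φ σ) (φ τ) := by
  obtain ⟨c, hc⟩ := hK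
  refine (CantorScheme.exists_continuous_pairwise_of_split (β := Bool)
    (P := fun C => ∃ c ∈ K, ∃ s > 0, C = K ∩ closedBall c s) (R := fun x y => ε < normDist x y)
    (by rintro _ ⟨c, -, s, -, rfl⟩; exact hKc.inter isClosed_closedBall)
    (by rintro _ ⟨c, hc, s, hs, rfl⟩; exact ⟨c, hc, mem_closedBall_self hs.le⟩)
    ?_ ⟨c, hc, 1, one_pos, rfl⟩).imp fun φ hφ => ⟨hφ.1.trans inter_subset_left, hφ.2⟩
  rintro _ ⟨c, hc, s, hs, rfl⟩ δ hδ
  obtain ⟨f, hf, g, hg, t, ht, htδ, hft, hgt, hsep⟩ :=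
    exists_separated_closedBalls_of_lt_normDiam hε h hc hs hδ
  refine ⟨fun b => K ∩ closedBall (cond b g f) t, fun b => ⟨⟨cond b g f, ?_, t, ht, rfl⟩,
    inter_subset_inter_right K ?_, fun x hx y hy => ?_⟩, ?_⟩
  · cases b <;> assumption
  · cases b <;> assumption
  · calc dist x y ≤ dist x (cond b g f) + dist y (cond b g f) := dist_triangle_right _ _ _
      _ ≤ t + t := add_le_add (mem_closedBall.1 hx.2) (mem_closedBall.1 hy.2)
      _ ≤ δ := by linarith
  · rintro (_ | _) (_ | _) hab x hx y hy
    · exact absurd rfl hab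
    · exact hsep x hx.2 y hy.2
    · exact normDist_comm x y ▸ hsep y hy.2 x hx.2
    · exact absurd rfl hab

end ProductMetric

/-- If `K ⊆ H` is nonempty compact and every open `U` meeting `K` gives `K ∩ U` of norm
diameter `> ε`, then `K` contains a nonempty perfect set which is `ε`-separated in norm;
in particular `K` is not norm separable. -/
theorem exists_perfect_separated (K : Set H) (hK : K.Nonempty) (hc : IsCompact K)
    (ε : ℝ) (hε : 0 < ε)
    (h : ∀ U : Set H, IsOpen U → (K ∩ U).Nonempty → ε < normDiam (K ∩ U)) :
    (∃ P : Set H, P ⊆ K ∧ P.Nonempty ∧ IsCompact P ∧ Perfect P ∧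
      ∀ f ∈ P, ∀ g ∈ P, f ≠ g → ε < normDist f g) ∧
    ¬ NormSeparable K := by
  obtain ⟨φ, hφK, hφc, hφsep⟩ := exists_continuous_pairwise_lt_normDist hc.isClosed hK hε.le h
  have hsep : ∀ f ∈ range φ, ∀ g ∈ range φ, f ≠ g → ε < normDist f g := by
    rintro _ ⟨σ, rfl⟩ _ ⟨τ, rfl⟩ hne
    exact hφsep fun hστ => hne (congrArg φ hστ)
  have hφinj : Injective φ := fun σ τ hστ => by
    by_contra hne
    have : ε < normDist (φ σ) (φ τ) := hφsep hne
    rw [hστ, normDist_self] at this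
    exact hε.not_gt this
  have hunc : ¬ (range φ).Countable := fun hcount => by
    exact not_countable_nat_bool (countable_univ_iff.1 (by simpa using hcount.preimage hφinj))
  obtain ⟨P, hP, hPne, hPφ⟩ :=
    exists_perfect_nonempty_of_isClosed_of_not_countable (isCompact_range hφc).isClosed hunc
  exact ⟨⟨P, hPφ.trans hφK, hPne, hP.closed.isCompact, hP,
    fun f hf g hg => hsep f (hPφ hf) g (hPφ hg)⟩,
    fun hsepK => hunc (hsepK.countable_of_separated hε hφK hsep)⟩
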